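/- Let {a_n}_{n≥1} be a nonnegative real sequence which is a mean value bounded variation sequence (MVBVS). If the sine series ∑_{n=1}^∞ a_n sin(nx) converges uniformly on ℝ (i.e., its partial sums S_n(x) = ∑_{k=1}^n a_k sin(kx) converge uniformly), then lim_{n→∞} n·a_n = 0. -/

import Mathlib

/-!
Evaluating the Cauchy differences `S_{2n} - S_{n-1}` of the sine series at `x = π / (4n)`, where
`sin (k x) ≥ 1/2` for `n ≤ k ≤ 2n`, shows that the block sums `∑_{k=n}^{2n} a_k` tend to zero, and
hence so do the sums over the windows `[n/λ, λn]`, which are covered by boundedly many dyadic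
blocks. Since `a_n ≤ a_k + ∑_{i=n}^{2n} |a_i - a_{i+1}|` for `n ≤ k ≤ 2n`, summing over `k` and
using the MVBV condition gives `n a_n ≤ ∑_{k=n}^{2n} a_k + 2C ∑_{n/λ ≤ k ≤ λn} a_k → 0`.
-/

open Filter

/-- A nonnegative sequence (indexed from 1) is a mean value bounded variation sequence. -/
def IsMVBVS (a : ℕ → ℝ) : Prop :=
  ∃ lam : ℝ, 2 ≤ lam ∧ ∃ C : ℝ, 0 < C ∧ ∀ n : ℕ, 1 ≤ n →
    ∑ k ∈ Finset.Icc n (2 * n), |a k - a (k + 1)| ≤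
      (C / n) * ∑ k ∈ Finset.Icc ⌊(n : ℝ) / lam⌋₊ ⌊lam * n⌋₊, a k

open Finset Topology

theorem TendstoUniformly.tendsto_sub_comp {ι κ α β : Type*} [SeminormedAddCommGroup β]
    {F : ι → α → β} {f : α → β} {p : Filter ι} (h : TendstoUniformly F f p)
    {l : Filter κ} {u v : κ → ι} (hu : Tendsto u l p) (hv : Tendsto v l p) (x : κ → α) :
    Tendsto (fun i => F (u i) (x i) - F (v i) (x i)) l (𝓝 0) := by
  have hsub {w : κ → ι} (hw : Tendsto w l p) :
      Tendsto (fun i => F (w i) (x i) - f (x i)) l (𝓝 0) := by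
    rw [tendsto_zero_iff_norm_tendsto_zero]
    simpa [dist_eq_norm'] using tendsto_uniformity_iff_dist_tendsto_zero.1
      ((tendstoUniformly_iff_tendsto.1 h).comp (hw.prodMk tendsto_top))
  simpa using (hsub hu).sub (hsub hv)

theorem sum_Icc_one_sub_sum_Icc_one (f : ℕ → ℝ) {n m : ℕ} (h : n ≤ m) :
    ∑ k ∈ Icc 1 m, f k - ∑ k ∈ Icc 1 n, f k = ∑ k ∈ Icc (n + 1) m, f k := by
  have := sum_Ioc_consecutive f (Nat.zero_le n) h
  simp only [← Icc_add_one_left_eq_Ioc, zero_add] at this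
  linarith

theorem one_half_le_sin_mul_pi_div {n k : ℕ} (hn : 0 < n) (hnk : n ≤ k) (hk : k ≤ 2 * n) :
    1 / 2 ≤ Real.sin (k * (Real.pi / (4 * n))) := by
  have hn' : (0 : ℝ) < n := by exact_mod_cast hn
  have hnk' : (n : ℝ) ≤ k := by exact_mod_cast hnk
  have hk' : (k : ℝ) ≤ 2 * n := by exact_mod_cast hk
  have hlo : Real.pi / 4 ≤ k * (Real.pi / (4 * n)) := by
    rw [mul_div_assoc', le_div_iff₀ (by positivity)]
    nlinarith [Real.pi_pos]
  have hhi : k * (Real.pi / (4 * n)) ≤ Real.pi / 2 := by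
    rw [mul_div_assoc', div_le_iff₀ (by positivity)]
    nlinarith [Real.pi_pos]
  calc (1 : ℝ) / 2 = 2 / Real.pi * (Real.pi / 4) := by field_simp; ring
    _ ≤ 2 / Real.pi * (k * (Real.pi / (4 * n))) := by gcongr
    _ ≤ _ := Real.mul_le_sin (by linarith [Real.pi_pos]) hhi

section NonnegSequence

variable {a : ℕ → ℝ} (ha : ∀ n, 1 ≤ n → 0 ≤ a n)
include ha

theorem sum_Icc_nonneg_of_one_le {m M : ℕ} (hm : 1 ≤ m) : 0 ≤ ∑ k ∈ Icc m M, a k :=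
  sum_nonneg fun k hk => ha k (hm.trans (mem_Icc.1 hk).1)

theorem tendsto_sum_Icc_two_mul_of_tendstoUniformly_sin {f : ℝ → ℝ}
    (hunif : TendstoUniformly
      (fun (n : ℕ) (x : ℝ) => ∑ k ∈ Icc 1 n, a k * Real.sin (k * x)) f atTop) :
    Tendsto (fun n : ℕ => ∑ k ∈ Icc n (2 * n), a k) atTop (𝓝 0) := by
  have hdiff := hunif.tendsto_sub_comp
    (tendsto_atTop_mono (fun n => Nat.le_mul_of_pos_left n two_pos) tendsto_id)
    (tendsto_sub_atTop_nat 1) (fun n : ℕ => Real.pi / (4 * n))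
  refine squeeze_zero' (eventually_atTop.2 ⟨1, fun n hn => sum_Icc_nonneg_of_one_le ha hn⟩)
    (eventually_atTop.2 ⟨1, fun n hn => ?_⟩) (by simpa using hdiff.const_mul 2)
  rw [sum_Icc_one_sub_sum_Icc_one _ (by omega), Nat.sub_add_cancel hn, mul_sum]
  refine sum_le_sum fun k hk => ?_
  have hsin := one_half_le_sin_mul_pi_div hn (mem_Icc.1 hk).1 (mem_Icc.1 hk).2
  nlinarith [ha k (hn.trans (mem_Icc.1 hk).1)]

variable (hblock : Tendsto (fun n : ℕ => ∑ k ∈ Icc n (2 * n), a k) atTop (𝓝 0))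
include hblock

theorem tendsto_sum_Icc_two_pow_mul (j : ℕ) :
    Tendsto (fun m : ℕ => ∑ k ∈ Icc m (2 ^ j * m), a k) atTop (𝓝 0) := by
  induction j with
  | zero =>
    simp only [pow_zero, one_mul, Icc_self, sum_singleton]
    refine squeeze_zero' (eventually_atTop.2 ⟨1, ha⟩)
      (eventually_atTop.2 ⟨1, fun m hm => ?_⟩) hblock
    exact single_le_sum (fun k hk => ha k (hm.trans (mem_Icc.1 hk).1))
      (left_mem_Icc.2 (by omega))
  | succ j ih =>
    have hle : ∀ m, 1 ≤ m → ∑ k ∈ Icc m (2 ^ (j + 1) * m), a k ≤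
        ∑ k ∈ Icc m (2 ^ j * m), a k + ∑ k ∈ Icc (2 ^ j * m) (2 * (2 ^ j * m)), a k := by
      intro m hm
      have hmM : m ≤ 2 ^ j * m := Nat.le_mul_of_pos_left m (by positivity)
      rw [pow_succ, mul_comm _ 2, mul_assoc]
      simp only [← Ico_add_one_right_eq_Icc]
      rw [← sum_Ico_consecutive _ hmM (by omega)]
      refine add_le_add (sum_le_sum_of_subset_of_nonneg (Ico_subset_Ico_right (by omega))
        fun k hk _ => ha k (hm.trans (mem_Ico.1 hk).1)) le_rfl
    refine squeeze_zero' (eventually_atTop.2 ⟨1, fun m hm => sum_Icc_nonneg_of_one_le ha hm⟩)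
      (eventually_atTop.2 ⟨1, hle⟩) ?_
    have hM : Tendsto (fun m : ℕ => 2 ^ j * m) atTop atTop :=
      tendsto_atTop_mono (fun m => Nat.le_mul_of_pos_left m (by positivity)) tendsto_id
    simpa using ih.add (hblock.comp hM)

theorem tendsto_sum_Icc_of_le_mul {l u : ℕ → ℕ} (hl : Tendsto l atTop atTop) {K : ℝ}
    (hu : ∀ᶠ n in atTop, (u n : ℝ) ≤ K * l n) :
    Tendsto (fun n => ∑ k ∈ Icc (l n) (u n), a k) atTop (𝓝 0) := by
  obtain ⟨j, hj⟩ := pow_unbounded_of_one_lt K one_lt_two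
  refine squeeze_zero' ?_ ?_ ((tendsto_sum_Icc_two_pow_mul ha hblock j).comp hl)
  · filter_upwards [hl.eventually_ge_atTop 1] with n hn using sum_Icc_nonneg_of_one_le ha hn
  · filter_upwards [hl.eventually_ge_atTop 1, hu] with n hn hun
    refine sum_le_sum_of_subset_of_nonneg (Icc_subset_Icc le_rfl ?_)
      fun k hk _ => ha k (hn.trans (mem_Icc.1 hk).1)
    have : (u n : ℝ) ≤ 2 ^ j * l n := hun.trans (by gcongr)
    exact_mod_cast this

end NonnegSequence

theorem eventually_floor_mul_le_mul_floor_div {lam : ℝ} (hlam : 0 < lam) :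
    ∀ᶠ n : ℕ in atTop, (⌊lam * n⌋₊ : ℝ) ≤ 2 * lam ^ 2 * ⌊(n : ℝ) / lam⌋₊ := by
  filter_upwards [tendsto_natCast_atTop_atTop.eventually_ge_atTop (2 * lam)] with n hn
  calc (⌊lam * n⌋₊ : ℝ) ≤ lam * n := Nat.floor_le (by positivity)
    _ ≤ 2 * lam ^ 2 * (n / lam - 1) := by
      have : 2 * lam ^ 2 * (n / lam - 1) = lam * n + lam * (n - 2 * lam) := by
        field_simp; ring
      nlinarith
    _ ≤ _ := by gcongr; exact (Nat.sub_one_lt_floor _).le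

theorem le_add_sum_abs_sub_succ (a : ℕ → ℝ) {n k m : ℕ} (hnk : n ≤ k) (hkm : k ≤ m) :
    a n ≤ a k + ∑ i ∈ Icc n m, |a i - a (i + 1)| := by
  have hdist := dist_le_Ico_sum_dist a hnk
  simp only [Real.dist_eq] at hdist
  have hsub : ∑ i ∈ Ico n k, |a i - a (i + 1)| ≤ ∑ i ∈ Icc n m, |a i - a (i + 1)| :=
    sum_le_sum_of_subset_of_nonneg (Ico_subset_Icc_self.trans (Icc_subset_Icc le_rfl hkm))
      fun _ _ _ => abs_nonneg _
  linarith [le_abs_self (a n - a k)]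

theorem natCast_mul_le_sum_Icc_add_variation (a : ℕ → ℝ) {n : ℕ} (han : 0 ≤ a n) :
    n * a n ≤ ∑ k ∈ Icc n (2 * n), a k + (n + 1) * ∑ k ∈ Icc n (2 * n), |a k - a (k + 1)| := by
  have hcard : ((Icc n (2 * n)).card : ℝ) = n + 1 := by
    rw [Nat.card_Icc, show 2 * n + 1 - n = n + 1 by omega]; push_cast; ring
  calc (n : ℝ) * a n ≤ (n + 1) * a n := by nlinarith
    _ = ∑ k ∈ Icc n (2 * n), a n := by rw [sum_const, nsmul_eq_mul, hcard]
    _ ≤ ∑ k ∈ Icc n (2 * n), (a k + ∑ i ∈ Icc n (2 * n), |a i - a (i + 1)|) :=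
      sum_le_sum fun k hk => le_add_sum_abs_sub_succ a (mem_Icc.1 hk).1 (mem_Icc.1 hk).2
    _ = _ := by rw [sum_add_distrib, sum_const, nsmul_eq_mul, hcard]

theorem natCast_mul_le_of_sum_abs_sub_succ_le (a : ℕ → ℝ) {n : ℕ} (hn : 1 ≤ n) (han : 0 ≤ a n)
    {C W : ℝ} (hvar : ∑ k ∈ Icc n (2 * n), |a k - a (k + 1)| ≤ C / n * W) :
    n * a n ≤ ∑ k ∈ Icc n (2 * n), a k + 2 * C * W := by
  set V := ∑ k ∈ Icc n (2 * n), |a k - a (k + 1)|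
  have hV : 0 ≤ V := sum_nonneg fun _ _ => abs_nonneg _
  have hn' : (1 : ℝ) ≤ n := by exact_mod_cast hn
  calc (n : ℝ) * a n ≤ ∑ k ∈ Icc n (2 * n), a k + (n + 1) * V :=
        natCast_mul_le_sum_Icc_add_variation a han
    _ ≤ ∑ k ∈ Icc n (2 * n), a k + 2 * n * (C / n * W) := by
      have : ((n : ℝ) + 1) * V ≤ 2 * n * V := by nlinarith
      linarith [mul_le_mul_of_nonneg_left hvar (by positivity : (0 : ℝ) ≤ 2 * n)]
    _ = _ := by field_simp

/-- If a nonnegative MVBV sequence has a uniformly convergent sine series,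
then `n·aₙ → 0`. -/
theorem stmt5 (a : ℕ → ℝ) (ha : ∀ n : ℕ, 1 ≤ n → 0 ≤ a n)
    (hMVBV : IsMVBVS a) (f : ℝ → ℝ)
    (hunif : TendstoUniformly
      (fun (n : ℕ) (x : ℝ) => ∑ k ∈ Finset.Icc 1 n, a k * Real.sin (k * x))
      f atTop) :
    Tendsto (fun n : ℕ => (n : ℝ) * a n) atTop (nhds 0) := by
  obtain ⟨lam, hlam, C, -, hvar⟩ := hMVBV
  have hlam0 : 0 < lam := by linarith
  have hblock := tendsto_sum_Icc_two_mul_of_tendstoUniformly_sin ha hunif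
  have hwindow : Tendsto (fun n : ℕ => ∑ k ∈ Icc ⌊(n : ℝ) / lam⌋₊ ⌊lam * n⌋₊, a k) atTop (𝓝 0) :=
    tendsto_sum_Icc_of_le_mul ha hblock
      (tendsto_nat_floor_atTop.comp (tendsto_natCast_atTop_atTop.atTop_div_const hlam0))
      (eventually_floor_mul_le_mul_floor_div hlam0)
  refine squeeze_zero' (eventually_atTop.2 ⟨1, fun n hn => mul_nonneg n.cast_nonneg (ha n hn)⟩)
    (eventually_atTop.2 ⟨1, fun n hn =>
      natCast_mul_le_of_sum_abs_sub_succ_le a hn (ha n hn) (hvar n hn)⟩) ?_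
  simpa using hblock.add (hwindow.const_mul (2 * C))
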